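/- arXiv:2005.03095 — 2 statements merged into one kernel-verified Lean document; each statement's English description precedes it below -/
import Mathlib

section
/- The OPT-1 mechanism for the Happiness objective is strategy-proof: for every agent i, every true preference t_i ∈ {−1,0,1}, every vector t_{−i} of the other agents' declared preferences, and every misreport t_i′ ∈ {−1,0,1}, the utility of agent i (with his true preference) at the facility location output by the mechanism on the truthful profile (t_i, t_{−i}) is greater than or equal to his utility at the location output on the misreported profile (t_i′, t_{−i}). -/
/-!
Split the objective of a profile in which agent `i` is active as `min (ρᵢ) q`, where `q` is the
minimum over the other active agents and does not depend on `i`'s report. Suppose a misreport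
moves the output from `y` to a point `y₂` that `i` strictly prefers. Agent `i`'s term cannot be the
binding one at `y₂`, so optimality of `y` gives `q y₂ ≤ q y`. A nonzero misreport is the opposite
preference and ranks the two points the other way, so the symmetric argument gives `q y ≤ q y₂`;
a report of `0` removes `i` from the objective, which then is just `q`. Either way the two objective
values agree, so `y` and `y₂` maximize both objectives, and tie-breaking by the fixed order forces
`y = y₂`.
-/

open Finset Function

section LeastMaximizer

variable {P β : Type*} [LinearOrder β] {le : P → P → Prop} {S : Set P}

def IsLeastMaximizer (le : P → P → Prop) (S : Set P) (Φ : P → β) (y : P) : Prop :=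
  y ∈ S ∧ (∀ z ∈ S, Φ z ≤ Φ y) ∧ ∀ y' ∈ S, (∀ z ∈ S, Φ z ≤ Φ y') → le y y'

namespace IsLeastMaximizer

variable {Φ a b q : P → β} {y y₂ z : P}

theorem le_of_le (hy : IsLeastMaximizer le S Φ y) (hz : z ∈ S) (h : Φ y ≤ Φ z) : le y z :=
  hy.2.2 z hz fun w hw => (hy.2.1 w hw).trans h

theorem le_of_lt_of_min (hy : IsLeastMaximizer le S (fun w => min (a w) (q w)) y) (hz : z ∈ S)
    (ha : a y < a z) : q z ≤ q y := by
  have := hy.2.1 z hz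
  grind

theorem le_of_lt_of_le_of_min (hy : IsLeastMaximizer le S (fun w => min (a w) (q w)) y)
    (hz : z ∈ S) (ha : a y < a z) (hq : q y ≤ q z) : le y z := by
  refine hy.le_of_le hz ?_
  have := hy.2.1 z hz
  grind

theorem eq_of_min_of_min (hanti : ∀ a ∈ S, ∀ b ∈ S, le a b → le b a → a = b)
    (hy : IsLeastMaximizer le S (fun w => min (a w) (q w)) y)
    (hy₂ : IsLeastMaximizer le S (fun w => min (b w) (q w)) y₂)
    (ha : a y < a y₂) (hb : b y₂ < b y) : y = y₂ := by
  have hq := le_antisymm (hy₂.le_of_lt_of_min hy.1 hb) (hy.le_of_lt_of_min hy₂.1 ha)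
  exact hanti y hy.1 y₂ hy₂.1 (hy.le_of_lt_of_le_of_min hy₂.1 ha hq.le)
    (hy₂.le_of_lt_of_le_of_min hy.1 hb hq.ge)

theorem eq_of_min (hanti : ∀ a ∈ S, ∀ b ∈ S, le a b → le b a → a = b)
    (hy : IsLeastMaximizer le S (fun w => min (a w) (q w)) y)
    (hy₂ : IsLeastMaximizer le S q y₂) (ha : a y < a y₂) : y = y₂ := by
  have hq := hy₂.2.1 y hy.1
  exact hanti y hy.1 y₂ hy₂.1 (hy.le_of_lt_of_le_of_min hy₂.1 ha hq)
    (hy₂.le_of_le hy.1 (hy.le_of_lt_of_min hy₂.1 ha))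

end IsLeastMaximizer

end LeastMaximizer

section ActiveAgents

variable {ι T P β : Type*} [Fintype ι] [Zero T] [DecidableEq T] [LinearOrder β]

def active (t : ι → T) : Finset ι := univ.filter fun j => t j ≠ 0

@[simp]
theorem mem_active {t : ι → T} {j : ι} : j ∈ active t ↔ t j ≠ 0 := by
  simp [active]

theorem active_eq_empty {t : ι → T} : active t = ∅ ↔ ∀ j, t j = 0 := by
  simp [Finset.eq_empty_iff_forall_notMem]

def activeInf (ρ : ι → T → P → β) (t : ι → T) (h : (active t).Nonempty) (z : P) : β :=
  (active t).inf' h fun j => ρ j (t j) z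

variable [DecidableEq ι]

theorem erase_active_update (t : ι → T) (i : ι) (s : T) :
    (active (update t i s)).erase i = (active t).erase i := by
  ext j
  rcases eq_or_ne j i with rfl | hj <;> simp [*]

theorem active_update_zero (t : ι → T) (i : ι) : active (update t i 0) = (active t).erase i := by
  rw [← erase_active_update t i 0, erase_eq_of_notMem (by simp)]

theorem active_update_of_ne_zero (t : ι → T) (i : ι) {s : T} (hs : s ≠ 0) :
    active (update t i s) = insert i ((active t).erase i) := by
  rw [← erase_active_update t i s, insert_erase (by simpa using hs)]

variable {ρ : ι → T → P → β} {t : ι → T} {i : ι} {s : T}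

theorem activeInf_update_of_ne_zero (hs : s ≠ 0) (hB : ((active t).erase i).Nonempty)
    (h : (active (update t i s)).Nonempty) :
    activeInf ρ (update t i s) h = fun z => min (ρ i s z)
      (((active t).erase i).inf' hB fun j => ρ j (t j) z) := by
  ext z
  simp only [activeInf]
  rw [inf'_congr h (active_update_of_ne_zero t i hs) fun _ _ => rfl, inf'_insert hB, update_self]
  refine congrArg (min _) (inf'_congr hB rfl fun j hj => ?_)
  rw [update_of_ne (ne_of_mem_erase hj)]

theorem activeInf_update_of_erase_eq_empty (hs : s ≠ 0) (hB : (active t).erase i = ∅)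
    (h : (active (update t i s)).Nonempty) :
    activeInf ρ (update t i s) h = ρ i s := by
  ext z
  simp only [activeInf]
  rw [inf'_congr h (by rw [active_update_of_ne_zero t i hs, hB, insert_empty]) fun _ _ => rfl,
    inf'_singleton, update_self]

theorem activeInf_update_zero (hB : ((active t).erase i).Nonempty)
    (h : (active (update t i 0)).Nonempty) :
    activeInf ρ (update t i 0) h = fun z => ((active t).erase i).inf' hB fun j => ρ j (t j) z := by
  ext z
  refine inf'_congr h (active_update_zero t i) fun j hj => ?_
  rw [update_of_ne (ne_of_mem_erase (active_update_zero t i ▸ hj))]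

theorem le_of_isLeastMaximizer_activeInf {le : P → P → Prop} {S : Set P} {y y₂ : P}
    (hanti : ∀ a ∈ S, ∀ b ∈ S, le a b → le b a → a = b) (hi : t i ≠ 0)
    (hy : ∀ h, IsLeastMaximizer le S (activeInf ρ t h) y)
    (hy₂ : ∀ h, IsLeastMaximizer le S (activeInf ρ (update t i s) h) y₂) (hy₂S : y₂ ∈ S)
    (hflip : s ≠ 0 → ρ i (t i) y < ρ i (t i) y₂ → ρ i s y₂ < ρ i s y) :
    ρ i (t i) y₂ ≤ ρ i (t i) y := by
  by_contra! hgain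
  rw [← update_eq_self i t] at hy
  have hA : (active (update t i (t i))).Nonempty := ⟨i, by simpa using hi⟩
  rcases ((active t).erase i).eq_empty_or_nonempty with hB | hB
  · rcases eq_or_ne s 0 with rfl | hs
    · have := (hy hA).2.1 y₂ hy₂S
      rw [activeInf_update_of_erase_eq_empty hi hB] at this
      exact this.not_gt hgain
    · have hA₂ : (active (update t i s)).Nonempty := ⟨i, by simpa using hs⟩
      have := (hy₂ hA₂).2.1 y (hy hA).1
      rw [activeInf_update_of_erase_eq_empty hs hB] at this
      exact this.not_gt (hflip hs hgain)
  · have hΦ := hy hA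
    rw [activeInf_update_of_ne_zero hi hB] at hΦ
    have hA₂ : (active (update t i s)).Nonempty :=
      (erase_active_update t i s ▸ hB).mono (erase_subset _ _)
    have hΨ := hy₂ hA₂
    rcases eq_or_ne s 0 with rfl | hs
    · rw [activeInf_update_zero hB] at hΨ
      exact hgain.ne (congrArg _ (hΦ.eq_of_min hanti hΨ hgain))
    · rw [activeInf_update_of_ne_zero hs hB] at hΨ
      exact hgain.ne (congrArg _ (hΦ.eq_of_min_of_min hanti hΨ hgain (hflip hs hgain)))

end ActiveAgents

theorem lt_of_lt_of_strictMonoOn_of_strictAntiOn {g : ℤ → ℝ → ℝ}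
    (hgm : StrictMonoOn (g (-1)) (Set.Ici 0)) (hga : StrictAntiOn (g 1) (Set.Ici 0))
    {s s' : ℤ} (hs : s = -1 ∨ s = 1) (hs' : s' = -1 ∨ s' = 1) (hne : s' ≠ s)
    {a b : ℝ} (ha : 0 ≤ a) (hb : 0 ≤ b) (h : g s a < g s b) : g s' b < g s' a := by
  have hflip {a b : ℝ} (ha : 0 ≤ a) (hb : 0 ≤ b) : g (-1) a < g (-1) b ↔ g 1 b < g 1 a :=
    (hgm.lt_iff_lt ha hb).trans (hga.lt_iff_gt hb ha).symm
  rcases hs with rfl | rfl <;> rcases hs' with rfl | rfl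
  exacts [absurd rfl hne, (hflip ha hb).1 h, (hflip hb ha).2 h, absurd rfl hne]

theorem opt1_happiness_strategyproof_general
    (d n : ℕ) (x : Fin n → EuclideanSpace ℝ (Fin d))
    (S : Set (EuclideanSpace ℝ (Fin d)))
    (g : Fin n → ℤ → ℝ → ℝ)
    (hgm : ∀ i : Fin n, StrictMonoOn (g i (-1)) (Set.Ici 0))
    (hg0 : ∀ i : Fin n, ∀ a ∈ Set.Ici (0:ℝ), ∀ b ∈ Set.Ici (0:ℝ), g i 0 a = g i 0 b)
    (hga : ∀ i : Fin n, StrictAntiOn (g i 1) (Set.Ici 0))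
    -- the maximum achievable utility uᵢ*(t) = sup_{y ∈ S} uᵢ(t,y), finite and positive
    (ustar : Fin n → ℤ → ℝ)
    (hstar : ∀ (i : Fin n) (t : ℤ), t = -1 ∨ t = 0 ∨ t = 1 →
      IsLUB ((fun y => g i t ‖x i - y‖) '' S) (ustar i t) ∧ 0 < ustar i t)
    -- a linear order ≼ on S
    (le : EuclideanSpace ℝ (Fin d) → EuclideanSpace ℝ (Fin d) → Prop)
    (hanti : ∀ a ∈ S, ∀ b ∈ S, le a b → le b a → a = b)
    -- the mechanism: on each declared profile it outputs the ≼-least maximizer of the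
    -- minimum happiness ratio of the agents with nonzero declared preference
    (M : (Fin n → ℤ) → EuclideanSpace ℝ (Fin d))
    (hM : ∀ t : Fin n → ℤ, (∀ i, t i = -1 ∨ t i = 0 ∨ t i = 1) →
      ∀ hne : (Finset.univ.filter (fun i : Fin n => t i ≠ 0)).Nonempty,
        M t ∈ S ∧
        (∀ z ∈ S,
          (Finset.univ.filter (fun i : Fin n => t i ≠ 0)).inf' hne
              (fun i => g i (t i) ‖x i - z‖ / ustar i (t i)) ≤
          (Finset.univ.filter (fun i : Fin n => t i ≠ 0)).inf' hne
              (fun i => g i (t i) ‖x i - M t‖ / ustar i (t i))) ∧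
        (∀ y ∈ S,
          (∀ z ∈ S,
            (Finset.univ.filter (fun i : Fin n => t i ≠ 0)).inf' hne
                (fun i => g i (t i) ‖x i - z‖ / ustar i (t i)) ≤
            (Finset.univ.filter (fun i : Fin n => t i ≠ 0)).inf' hne
                (fun i => g i (t i) ‖x i - y‖ / ustar i (t i))) → le (M t) y))
    (hM0 : ∀ t : Fin n → ℤ, (∀ i, t i = 0) → M t ∈ S ∧ ∀ y ∈ S, le (M t) y) :
    -- strategy-proofness
    ∀ (i : Fin n) (t : Fin n → ℤ), (∀ j, t j = -1 ∨ t j = 0 ∨ t j = 1) →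
      ∀ t' : ℤ, (t' = -1 ∨ t' = 0 ∨ t' = 1) →
        g i (t i) ‖x i - M (Function.update t i t')‖ ≤ g i (t i) ‖x i - M t‖ := by
  intro i t ht t' ht'
  rcases eq_or_ne (t i) 0 with h0 | h0
  · rw [h0]
    exact (hg0 i _ (norm_nonneg _) _ (norm_nonneg _)).le
  rcases eq_or_ne t' (t i) with rfl | hne
  · rw [update_eq_self]
  have ht₂ : ∀ j, update t i t' j = -1 ∨ update t i t' j = 0 ∨ update t i t' j = 1 := by
    intro j
    rcases eq_or_ne j i with rfl | hj <;> simp [update_of_ne, *]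
  have hM₂S : M (update t i t') ∈ S := by
    rcases (active (update t i t')).eq_empty_or_nonempty with h | h
    · exact (hM0 _ (active_eq_empty.1 h)).1
    · exact (hM _ ht₂ h).1
  have hpos : ∀ s, s = -1 ∨ s = 0 ∨ s = 1 → 0 < ustar i s := fun s hs => (hstar i s hs).2
  refine (div_le_div_iff_of_pos_right (hpos _ (ht i))).1
    (le_of_isLeastMaximizer_activeInf (ρ := fun j s z => g j s ‖x j - z‖ / ustar j s)
      hanti h0 (hM t ht) (hM _ ht₂) hM₂S fun ht'0 hlt => ?_)
  refine div_lt_div_of_pos_right ?_ (hpos _ ht')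
  exact lt_of_lt_of_strictMonoOn_of_strictAntiOn (hgm i) (hga i) (by have := ht i; omega)
    (by omega) hne (norm_nonneg _) (norm_nonneg _)
    ((div_lt_div_iff_of_pos_right (hpos _ (ht i))).1 hlt)

/-- The OPT-1 mechanism for the Happiness objective is strategy-proof. -/
theorem opt1_happiness_strategyproof
    (d n : ℕ) (x : Fin n → EuclideanSpace ℝ (Fin d))
    (S : Set (EuclideanSpace ℝ (Fin d))) (hS : S.Nonempty)
    (g : Fin n → ℤ → ℝ → ℝ)
    (hgm : ∀ i : Fin n, StrictMonoOn (g i (-1)) (Set.Ici 0))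
    (hg0 : ∀ i : Fin n, ∀ a ∈ Set.Ici (0:ℝ), ∀ b ∈ Set.Ici (0:ℝ), g i 0 a = g i 0 b)
    (hga : ∀ i : Fin n, StrictAntiOn (g i 1) (Set.Ici 0))
    -- the maximum achievable utility uᵢ*(t) = sup_{y ∈ S} uᵢ(t,y), finite and positive
    (ustar : Fin n → ℤ → ℝ)
    (hstar : ∀ (i : Fin n) (t : ℤ), t = -1 ∨ t = 0 ∨ t = 1 →
      IsLUB ((fun y => g i t ‖x i - y‖) '' S) (ustar i t) ∧ 0 < ustar i t)
    -- a linear order ≼ on S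
    (le : EuclideanSpace ℝ (Fin d) → EuclideanSpace ℝ (Fin d) → Prop)
    (hrefl : ∀ a ∈ S, le a a)
    (htrans : ∀ a ∈ S, ∀ b ∈ S, ∀ c ∈ S, le a b → le b c → le a c)
    (hanti : ∀ a ∈ S, ∀ b ∈ S, le a b → le b a → a = b)
    (htotal : ∀ a ∈ S, ∀ b ∈ S, le a b ∨ le b a)
    -- the mechanism: on each declared profile it outputs the ≼-least maximizer of the
    -- minimum happiness ratio of the agents with nonzero declared preference
    (M : (Fin n → ℤ) → EuclideanSpace ℝ (Fin d))
    (hM : ∀ t : Fin n → ℤ, (∀ i, t i = -1 ∨ t i = 0 ∨ t i = 1) →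
      ∀ hne : (Finset.univ.filter (fun i : Fin n => t i ≠ 0)).Nonempty,
        M t ∈ S ∧
        (∀ z ∈ S,
          (Finset.univ.filter (fun i : Fin n => t i ≠ 0)).inf' hne
              (fun i => g i (t i) ‖x i - z‖ / ustar i (t i)) ≤
          (Finset.univ.filter (fun i : Fin n => t i ≠ 0)).inf' hne
              (fun i => g i (t i) ‖x i - M t‖ / ustar i (t i))) ∧
        (∀ y ∈ S,
          (∀ z ∈ S,
            (Finset.univ.filter (fun i : Fin n => t i ≠ 0)).inf' hne
                (fun i => g i (t i) ‖x i - z‖ / ustar i (t i)) ≤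
            (Finset.univ.filter (fun i : Fin n => t i ≠ 0)).inf' hne
                (fun i => g i (t i) ‖x i - y‖ / ustar i (t i))) → le (M t) y))
    (hM0 : ∀ t : Fin n → ℤ, (∀ i, t i = 0) → M t ∈ S ∧ ∀ y ∈ S, le (M t) y) :
    -- strategy-proofness
    ∀ (i : Fin n) (t : Fin n → ℤ), (∀ j, t j = -1 ∨ t j = 0 ∨ t j = 1) →
      ∀ t' : ℤ, (t' = -1 ∨ t' = 0 ∨ t' = 1) →
        g i (t i) ‖x i - M (Function.update t i t')‖ ≤ g i (t i) ‖x i - M t‖ :=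
  opt1_happiness_strategyproof_general d n x S g hgm hg0 hga ustar hstar le hanti M hM hM0
end

section
/- The OPT² mechanism is 3/4-approximate for the Egalitarian objective in 2-facility games with preferences in {0,1}²: consider a profile of n ≥ 1 agents with locations x_i ∈ [0, ℓ] and preferences t_i ∈ {0,1}², and suppose that for each facility j ∈ {1,2} the set A_j = { i : t_{ij} = 1 } is nonempty. Let y_j = (min_{i∈A_j} x_i + max_{i∈A_j} x_i)/2 for j ∈ {1,2}, i.e., each facility is placed independently at its optimal location, the midpoint between the leftmost and rightmost agents who want to be close to it. Then min_i u(x_i, t_i, (y₁, y₂)) ≥ (3/4) · sup_{y∈[0,ℓ]²} min_i u(x_i, t_i, y). -/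
/-- Utility an agent at `x` with preference `t` for a single facility at `yj`
(segment `[0,ℓ]`): distance if `t = -1`, constant `ℓ` if `t = 0`, `ℓ` minus
distance if `t = 1`. -/
noncomputable def uj (ℓ x : ℝ) (t : ℤ) (yj : ℝ) : ℝ :=
  if t = -1 then |x - yj| else if t = 0 then ℓ else ℓ - |x - yj|

/-- Total utility of an agent at `x` with preference vector `t` for two
facilities placed at `y = (y₁, y₂)`. -/
noncomputable def u2 (ℓ x : ℝ) (t : ℤ × ℤ) (y : ℝ × ℝ) : ℝ :=
  uj ℓ x t.1 y.1 + uj ℓ x t.2 y.2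

/-- Preference vectors with both coordinates in `{-1, 0, 1}`. -/
def validPref : Set (ℤ × ℤ) :=
  {p | (p.1 = -1 ∨ p.1 = 0 ∨ p.1 = 1) ∧ (p.2 = -1 ∨ p.2 = 0 ∨ p.2 = 1)}

/-- Admissible pairs of facility locations: `[0,ℓ]²`. -/
def box (ℓ : ℝ) : Set (ℝ × ℝ) := Set.Icc 0 ℓ ×ˢ Set.Icc 0 ℓ

/-- Preference vectors with both coordinates in `{0, 1}`. -/
def valid01 : Set (ℤ × ℤ) := {p | (p.1 = 0 ∨ p.1 = 1) ∧ (p.2 = 0 ∨ p.2 = 1)}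

lemma uj_zero (ℓ x yj : ℝ) : uj ℓ x 0 yj = ℓ := by simp [uj]
lemma uj_one (ℓ x yj : ℝ) : uj ℓ x 1 yj = ℓ - |x - yj| := by norm_num [uj]
lemma uj_le (ℓ x yj : ℝ) {t : ℤ} (ht : t = 0 ∨ t = 1) : uj ℓ x t yj ≤ ℓ := by
  rcases ht with h | h <;> subst h
  · simp [uj]
  · rw [uj_one]; linarith [abs_nonneg (x - yj)]

/-- the `OPT²` mechanism, placing each facility independently at
the midpoint between the leftmost and the rightmost agents who want to be close
to it, is `3/4`-approximate for the Egalitarian objective on instances with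
preferences in `{0,1}²` where each facility is wanted by some agent. -/
theorem opt2_egalitarian_approx
    (ℓ : ℝ) (hℓ : 0 < ℓ) (n : ℕ) (hn : 0 < n)
    (x : Fin n → ℝ) (t : Fin n → ℤ × ℤ)
    (hx : ∀ i, x i ∈ Set.Icc 0 ℓ)
    (ht : ∀ i, t i ∈ valid01)
    (h1 : (Finset.univ.filter (fun i : Fin n => (t i).1 = 1)).Nonempty)
    (h2 : (Finset.univ.filter (fun i : Fin n => (t i).2 = 1)).Nonempty) :
    (3/4) * (⨆ y ∈ box ℓ, ⨅ i, u2 ℓ (x i) (t i) y) ≤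
      ⨅ i, u2 ℓ (x i) (t i)
        ((((Finset.univ.filter (fun i : Fin n => (t i).1 = 1)).inf' h1 x +
            (Finset.univ.filter (fun i : Fin n => (t i).1 = 1)).sup' h1 x) / 2),
         (((Finset.univ.filter (fun i : Fin n => (t i).2 = 1)).inf' h2 x +
            (Finset.univ.filter (fun i : Fin n => (t i).2 = 1)).sup' h2 x) / 2)) := by
  
  have hι : Nonempty (Fin n) := ⟨⟨0, hn⟩⟩
  set F1 := Finset.univ.filter (fun i : Fin n => (t i).1 = 1) with hF1
  set F2 := Finset.univ.filter (fun i : Fin n => (t i).2 = 1) with hF2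
  set a1 := F1.inf' h1 x with ha1def
  set b1 := F1.sup' h1 x with hb1def
  set a2 := F2.inf' h2 x with ha2def
  set b2 := F2.sup' h2 x with hb2def
  have hbdd : ∀ y : ℝ × ℝ, BddBelow (Set.range fun i => u2 ℓ (x i) (t i) y) :=
    fun y => (Set.finite_range _).bddBelow
  obtain ⟨ia, hia, hxa⟩ := Finset.exists_mem_eq_inf' h1 x
  obtain ⟨ib, hib, hxb⟩ := Finset.exists_mem_eq_sup' h1 x
  obtain ⟨ic, hic, hxc⟩ := Finset.exists_mem_eq_inf' h2 x
  obtain ⟨id', hid, hxd⟩ := Finset.exists_mem_eq_sup' h2 x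
  have hta : (t ia).1 = 1 := (Finset.mem_filter.mp hia).2
  have htb : (t ib).1 = 1 := (Finset.mem_filter.mp hib).2
  have htc : (t ic).2 = 1 := (Finset.mem_filter.mp hic).2
  have htd : (t id').2 = 1 := (Finset.mem_filter.mp hid).2
  have hax : a1 = x ia := by rw [ha1def, hxa]
  have hbx : b1 = x ib := by rw [hb1def, hxb]
  have hcx : a2 = x ic := by rw [ha2def, hxc]
  have hdx : b2 = x id' := by rw [hb2def, hxd]
  have ha1 : 0 ≤ a1 := by rw [hax]; exact (hx ia).1
  have hb1 : b1 ≤ ℓ := by rw [hbx]; exact (hx ib).2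
  have ha2 : 0 ≤ a2 := by rw [hcx]; exact (hx ic).1
  have hb2 : b2 ≤ ℓ := by rw [hdx]; exact (hx id').2
  have hmem1 : ∀ i, (t i).1 = 1 → a1 ≤ x i ∧ x i ≤ b1 := fun i hi =>
    ⟨Finset.inf'_le x (Finset.mem_filter.mpr ⟨Finset.mem_univ i, hi⟩),
     Finset.le_sup' x (Finset.mem_filter.mpr ⟨Finset.mem_univ i, hi⟩)⟩
  have hmem2 : ∀ i, (t i).2 = 1 → a2 ≤ x i ∧ x i ≤ b2 := fun i hi =>
    ⟨Finset.inf'_le x (Finset.mem_filter.mpr ⟨Finset.mem_univ i, hi⟩),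
     Finset.le_sup' x (Finset.mem_filter.mpr ⟨Finset.mem_univ i, hi⟩)⟩
  have hab1 : a1 ≤ b1 := le_trans (hmem1 ia hta).1 (hmem1 ia hta).2
  have hab2 : a2 ≤ b2 := le_trans (hmem2 ic htc).1 (hmem2 ic htc).2
  -- key upper bound for facility 1 endpoints
  have key1 : ∀ y : ℝ × ℝ, (⨅ i, u2 ℓ (x i) (t i) y) ≤
      2*ℓ - ((b1 - a1)/2 + |y.1 - (a1+b1)/2|) := by
    intro y
    rcases le_total y.1 ((a1+b1)/2) with h | h
    · refine ciInf_le_of_le (hbdd y) ib ?_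
      have h2' : uj ℓ (x ib) (t ib).2 y.2 ≤ ℓ := uj_le _ _ _ (ht ib).2
      have e1 : uj ℓ (x ib) (t ib).1 y.1 = ℓ - |x ib - y.1| := by
        rw [htb, uj_one]
      have h3 : x ib - y.1 ≤ |x ib - y.1| := le_abs_self _
      have h4 : |y.1 - (a1+b1)/2| = (a1+b1)/2 - y.1 := by
        rw [abs_of_nonpos (by linarith)]; ring
      rw [u2, e1]
      linarith [hbx]
    · refine ciInf_le_of_le (hbdd y) ia ?_
      have h2' : uj ℓ (x ia) (t ia).2 y.2 ≤ ℓ := uj_le _ _ _ (ht ia).2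
      have e1 : uj ℓ (x ia) (t ia).1 y.1 = ℓ - |x ia - y.1| := by
        rw [hta, uj_one]
      have h3 : -(x ia - y.1) ≤ |x ia - y.1| := neg_le_abs _
      have h4 : |y.1 - (a1+b1)/2| = y.1 - (a1+b1)/2 := abs_of_nonneg (by linarith)
      rw [u2, e1]
      linarith [hax]
  have key2 : ∀ y : ℝ × ℝ, (⨅ i, u2 ℓ (x i) (t i) y) ≤
      2*ℓ - ((b2 - a2)/2 + |y.2 - (a2+b2)/2|) := by
    intro y
    rcases le_total y.2 ((a2+b2)/2) with h | h
    · refine ciInf_le_of_le (hbdd y) id' ?_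
      have h2' : uj ℓ (x id') (t id').1 y.1 ≤ ℓ := uj_le _ _ _ (ht id').1
      have e1 : uj ℓ (x id') (t id').2 y.2 = ℓ - |x id' - y.2| := by
        rw [htd, uj_one]
      have h3 : x id' - y.2 ≤ |x id' - y.2| := le_abs_self _
      have h4 : |y.2 - (a2+b2)/2| = (a2+b2)/2 - y.2 := by
        rw [abs_of_nonpos (by linarith)]; ring
      rw [u2, e1]
      linarith [hdx]
    · refine ciInf_le_of_le (hbdd y) ic ?_
      have h2' : uj ℓ (x ic) (t ic).1 y.1 ≤ ℓ := uj_le _ _ _ (ht ic).1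
      have e1 : uj ℓ (x ic) (t ic).2 y.2 = ℓ - |x ic - y.2| := by
        rw [htc, uj_one]
      have h3 : -(x ic - y.2) ≤ |x ic - y.2| := neg_le_abs _
      have h4 : |y.2 - (a2+b2)/2| = y.2 - (a2+b2)/2 := abs_of_nonneg (by linarith)
      rw [u2, e1]
      linarith [hcx]
  -- generic sup bound
  have hSle : ∀ C : ℝ, 0 ≤ C → (∀ y : ℝ × ℝ, (⨅ j, u2 ℓ (x j) (t j) y) ≤ C) →
      (⨆ y ∈ box ℓ, ⨅ i, u2 ℓ (x i) (t i) y) ≤ C := by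
    intro C hC h
    exact Real.iSup_le (fun y => Real.iSup_le (fun _ => h y) hC) hC
  refine le_ciInf fun i => ?_
  rcases (ht i).1 with h01 | h11 <;> rcases (ht i).2 with h02 | h12
  · -- (0,0)
    have hu : u2 ℓ (x i) (t i) ((a1+b1)/2, (a2+b2)/2) = ℓ + ℓ := by
      rw [u2, h01, h02, uj_zero, uj_zero]
    rw [hu]
    have hS : (⨆ y ∈ box ℓ, ⨅ i, u2 ℓ (x i) (t i) y) ≤ 2*ℓ := by
      refine hSle _ (by linarith) fun y => ?_
      refine ciInf_le_of_le (hbdd y) i ?_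
      have := uj_le ℓ (x i) y.1 (ht i).1
      have := uj_le ℓ (x i) y.2 (ht i).2
      rw [u2]; linarith
    linarith
  · -- (0,1)
    have hd2 : |x i - (a2+b2)/2| ≤ (b2 - a2)/2 := by
      have := hmem2 i h12
      rw [abs_le]; constructor <;> [linarith [this.1]; linarith [this.2]]
    have hu : u2 ℓ (x i) (t i) ((a1+b1)/2, (a2+b2)/2)
        = ℓ + (ℓ - |x i - (a2+b2)/2|) := by
      rw [u2, h01, h12, uj_zero, uj_one]
    rw [hu]
    have hS : (⨆ y ∈ box ℓ, ⨅ i, u2 ℓ (x i) (t i) y) ≤ 2*ℓ - (b2 - a2)/2 := by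
      refine hSle _ (by linarith) fun y => ?_
      have := key2 y
      have := abs_nonneg (y.2 - (a2+b2)/2)
      linarith
    linarith
  · -- (1,0)
    have hd1 : |x i - (a1+b1)/2| ≤ (b1 - a1)/2 := by
      have := hmem1 i h11
      rw [abs_le]; constructor <;> [linarith [this.1]; linarith [this.2]]
    have hu : u2 ℓ (x i) (t i) ((a1+b1)/2, (a2+b2)/2)
        = (ℓ - |x i - (a1+b1)/2|) + ℓ := by
      rw [u2, h11, h02, uj_zero, uj_one]
    rw [hu]
    have hS : (⨆ y ∈ box ℓ, ⨅ i, u2 ℓ (x i) (t i) y) ≤ 2*ℓ - (b1 - a1)/2 := by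
      refine hSle _ (by linarith) fun y => ?_
      have := key1 y
      have := abs_nonneg (y.1 - (a1+b1)/2)
      linarith
    linarith
  · -- (1,1)
    set d1 := |x i - (a1+b1)/2| with hd1def
    set d2 := |x i - (a2+b2)/2| with hd2def
    have hd1 : d1 ≤ (b1 - a1)/2 := by
      have := hmem1 i h11
      rw [hd1def, abs_le]; constructor <;> [linarith [this.1]; linarith [this.2]]
    have hd2 : d2 ≤ (b2 - a2)/2 := by
      have := hmem2 i h12
      rw [hd2def, abs_le]; constructor <;> [linarith [this.1]; linarith [this.2]]
    have hu : u2 ℓ (x i) (t i) ((a1+b1)/2, (a2+b2)/2)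
        = (ℓ - d1) + (ℓ - d2) := by
      rw [u2, h11, h12, uj_one, uj_one]
    rw [hu]
    have hS : (⨆ y ∈ box ℓ, ⨅ i, u2 ℓ (x i) (t i) y) ≤ 2*ℓ - (2/3)*(d1 + d2) := by
      refine hSle _ (by linarith) fun y => ?_
      have hA : (⨅ j, u2 ℓ (x j) (t j) y)
          ≤ (ℓ - |x i - y.1|) + (ℓ - |x i - y.2|) := by
        refine ciInf_le_of_le (hbdd y) i ?_
        rw [u2, h11, h12, uj_one, uj_one]
      have hB := key1 y
      have hC := key2 y
      have ht1 : d1 ≤ |x i - y.1| + |y.1 - (a1+b1)/2| := abs_sub_le _ _ _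
      have ht2 : d2 ≤ |x i - y.2| + |y.2 - (a2+b2)/2| := abs_sub_le _ _ _
      linarith
    linarith
end
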